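/- Let φ : K → L be a strong covering of finite weighted simplicial complexes such that w_K(F̄)/w_K(F) = w_L(φ(F̄))/w_L(φ(F)) whenever F is a facet of F̄. Then φ ∘ L^{up}_n(L) = L^{up}_n(K) ∘ φ as maps C^n(L) → C^n(K); consequently every eigenvalue of L^{up}_n(L, w_L) is an eigenvalue of L^{up}_n(K, w_K) (with eigenvectors given by φ-pullbacks). -/

import Mathlib

/-- A finite abstract simplicial complex on vertex set `Fin m`:
a collection of nonempty finite vertex sets closed under taking nonempty subsets. -/
def IsComplex {m : ℕ} (K : Finset (Finset (Fin m))) : Prop :=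
  (∀ s ∈ K, s.Nonempty) ∧ ∀ s ∈ K, ∀ t, t ⊆ s → t.Nonempty → t ∈ K

/-- The `n`-dimensional faces (simplices with `n+1` vertices) of `K`. -/
def faces {m : ℕ} (K : Finset (Finset (Fin m))) (n : ℕ) : Finset (Finset (Fin m)) :=
  K.filter fun s => s.card = n + 1

/-- The incidence sign `(-1)^i` where `i` is the position of vertex `v` in the
canonically (increasingly) ordered vertex list of the simplex `s`. -/
def incSign {m : ℕ} (s : Finset (Fin m)) (v : Fin m) : ℝ :=
  (-1 : ℝ) ^ ((s.sort (· ≤ ·)).idxOf v)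

/-- Simplicial coboundary with respect to canonical orientations:
`(δ f)([v₀,…,v_{n+1}]) = Σᵢ (-1)ⁱ f([v₀,…,v̂ᵢ,…,v_{n+1}])`. -/
def coboundary {m : ℕ} (f : Finset (Fin m) → ℝ) (s : Finset (Fin m)) : ℝ :=
  ∑ v ∈ s, incSign s v * f (s.erase v)

/-- The weighted up-Laplacian `L^{up}_n = δ_n^* δ_n` on `n`-cochains, where the formal
adjoint `δ_n^*` is taken with respect to the weighted inner products
`(f,g) = Σ_F w(F) f(F) g(F)` and is extended by zero on simplices of weight zero. -/
noncomputable def upLap {m : ℕ} (K : Finset (Finset (Fin m))) (w : Finset (Fin m) → ℝ) (n : ℕ)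
    (f : Finset (Fin m) → ℝ) (F : Finset (Fin m)) : ℝ :=
  if w F = 0 then 0 else
    (w F)⁻¹ * ∑ s ∈ (faces K (n + 1)).filter (fun s => F ⊆ s),
      w s * (∑ v ∈ s \ F, incSign s v) * coboundary f s

/-- `lam : Fin N → ℝ` is the non-decreasing enumeration (with multiplicity) of the
eigenvalues of the weighted up-Laplacian `L^{up}_n(K, w)` acting on `C^n(K, ℝ)`:
there is a linearly independent eigenbasis realizing these eigenvalues. -/
def eigenseq {m : ℕ} (K : Finset (Finset (Fin m))) (w : Finset (Fin m) → ℝ) (n : ℕ)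
    {N : ℕ} (lam : Fin N → ℝ) : Prop :=
  Monotone lam ∧ N = (faces K n).card ∧
    ∃ f : Fin N → (Finset (Fin m) → ℝ),
      LinearIndependent ℝ f ∧
      (∀ i F, F ∉ faces K n → f i F = 0) ∧
      (∀ i F, F ∈ faces K n → upLap K w n (f i) F = lam i * f i F)

/-- Extension of a finite eigenvalue sequence `lam : Fin N → ℝ` to integer indices,
by `lo` for indices `≤ 0` and by `hi` for indices `> N`. -/
def extSeq {N : ℕ} (lam : Fin N → ℝ) (lo hi : ℝ) (j : ℤ) : ℝ :=
  if h : 1 ≤ j ∧ j ≤ (N : ℤ) then lam ⟨(j - 1).toNat, by omega⟩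
  else if j ≤ 0 then lo else hi

/-- The orientation sign of the image of the simplex `F` under the vertex map `φ`,
with respect to canonical (increasing) orderings: `0` if the image is degenerate,
otherwise the sign of the permutation sorting the image list. -/
def mapSign {a b : ℕ} (φ : Fin a → Fin b) (F : Finset (Fin a)) : ℝ :=
  let l : List (Fin b) := (F.sort (· ≤ ·)).map φ
  if l.Nodup then
    (-1 : ℝ) ^ (Finset.univ.filter
      (fun p : Fin l.length × Fin l.length => p.1 < p.2 ∧ l.get p.2 < l.get p.1)).card
  else 0

/-- The cochain map induced by a vertex map `φ`:
`(φ g)([v₀,…,v_n]) = g([φ(v₀),…,φ(v_n)])` (zero on degenerate images). -/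
noncomputable def pullback {a b : ℕ} (φ : Fin a → Fin b) (g : Finset (Fin b) → ℝ)
    (F : Finset (Fin a)) : ℝ :=
  mapSign φ F * g (F.image φ)

/-- The formal adjoint `φ^*` of the induced cochain map with respect to the
weighted inner products on `C^n(K, w_K)` and `C^n(L, w_L)`. -/
noncomputable def pushforward {a b : ℕ} (φ : Fin a → Fin b) (K : Finset (Finset (Fin a)))
    (wK : Finset (Fin a) → ℝ) (wL : Finset (Fin b) → ℝ) (n : ℕ)
    (f : Finset (Fin a) → ℝ) (G : Finset (Fin b)) : ℝ :=
  if wL G = 0 then 0 else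
    (wL G)⁻¹ * ∑ F ∈ (faces K n).filter (fun F => F.image φ = G),
      wK F * mapSign φ F * f F

/-- `φ` is a simplicial covering map from `K` to `L`: it is simplicial, and the preimage of
every simplex of `L` is a (nonempty) union of pairwise disjoint simplices of `K`, each of
which is mapped bijectively onto it. -/
def IsCovering {a b : ℕ} (φ : Fin a → Fin b) (K : Finset (Finset (Fin a)))
    (L : Finset (Finset (Fin b))) : Prop :=
  (∀ s ∈ K, s.image φ ∈ L) ∧
  ∀ G ∈ L, (∃ F ∈ K, F.image φ = G) ∧
    (∀ F ∈ K, F.image φ = G → F.card = G.card) ∧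
    ∀ F ∈ K, ∀ F' ∈ K, F.image φ = G → F'.image φ = G → F ≠ F' → Disjoint F F'

/-- The strong covering condition in dimension `n`: for every `(n+1)`-simplex `Gb` of `L`
with facet `G`, and every `F` in the fiber over `G`, there is an `(n+1)`-simplex `Fb` of
`K` containing `F` with `φ(Fb) = Gb`. -/
def StrongAt {a b : ℕ} (φ : Fin a → Fin b) (K : Finset (Finset (Fin a)))
    (L : Finset (Finset (Fin b))) (n : ℕ) : Prop :=
  ∀ Gb ∈ faces L (n + 1), ∀ G ∈ faces L n, G ⊆ Gb →
    ∀ F ∈ faces K n, F.image φ = G →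
      ∃ Fb ∈ faces K (n + 1), F ⊆ Fb ∧ Fb.image φ = Gb

/-- `L` is `(n+1)`-path connected: any two `(n+1)`-simplices are joined by a chain of
`(n+1)`-simplices in which consecutive ones are `n`-down neighbours (share an `n`-face). -/
def UpConn {b : ℕ} (L : Finset (Finset (Fin b))) (n : ℕ) : Prop :=
  ∀ s ∈ faces L (n + 1), ∀ t ∈ faces L (n + 1),
    Relation.ReflTransGen (fun x y => y ∈ faces L (n + 1) ∧ (x ∩ y).card = n + 1) s t

/-- `μ` is an eigenvalue of the weighted up-Laplacian `L^{up}_n(K, w)`. -/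
def IsUpEig {m : ℕ} (K : Finset (Finset (Fin m))) (w : Finset (Fin m) → ℝ) (n : ℕ)
    (μ : ℝ) : Prop :=
  ∃ g : Finset (Fin m) → ℝ, g ≠ 0 ∧ (∀ F, F ∉ faces K n → g F = 0) ∧
    ∀ F ∈ faces K n, upLap K w n g F = μ * g F

/-- The normalizing weight function: weight `1` on `(n+1)`-simplices and the degree
(number of `(n+1)`-cofaces) on lower simplices. -/
def normWeight {m : ℕ} (K : Finset (Finset (Fin m))) (n : ℕ) (F : Finset (Fin m)) : ℝ :=
  if F.card = n + 2 then 1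
  else (((faces K (n + 1)).filter fun s => F ⊆ s).card : ℝ)

/-! A covering is injective on every simplex, and by the strong covering condition together with
the disjointness of the fibres it maps the cofaces of an `n`-simplex `F` of `K` bijectively onto
the cofaces of `φ F`. Pulling back commutes with the coboundary, `δ (φ^♯ g) = φ^♯ (δ g)`, and
`[F̄ : F] · sign(φ|F̄) = sign(φ|F) · [φ F̄ : φ F]` for the incidence numbers and the orientation
signs of `φ`, because deleting the `i`-th entry of a list without repetitions changes its number
of inversions by `i` plus the rank of the deleted entry, modulo 2. The weight-ratio hypothesis
then matches the coefficients `w(F̄)/w(F)` of the two up-Laplacians term by term. -/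

open Finset

theorem List.card_filter_get_eq_countP {α : Type*} (l : List α) (p : α → Bool) :
    #{k : Fin l.length | p (l.get k)} = l.countP p := by
  induction l with
  | nil => simp
  | cons x l ih =>
    rw [List.countP_cons, ← ih, Finset.card_filter, Finset.card_filter]
    exact (Fin.sum_univ_succ (n := l.length) _).trans (by simp [add_comm]; congr)

theorem List.Pairwise.idxOf_eq_countP_lt {α : Type*} [LinearOrder α] {l : List α}
    (hl : l.Pairwise (· < ·)) {v : α} (hv : v ∈ l) : l.idxOf v = l.countP (· < v) := by
  induction l with
  | nil => simp at hv
  | cons y l ih =>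
    rw [List.pairwise_cons] at hl
    by_cases hyv : y = v
    · subst hyv
      have : l.countP (· < y) = 0 :=
        List.countP_eq_zero.mpr fun x hx => by simpa using (hl.1 x hx).le
      simp [this]
    · have hv' : v ∈ l := by simpa [Ne.symm hyv] using hv
      rw [List.idxOf_cons_ne _ hyv, List.countP_cons, ih hl.2 hv',
        if_pos (by simpa using hl.1 v hv')]

theorem Finset.image_erase_of_injOn {α β : Type*} [DecidableEq α] [DecidableEq β]
    {f : α → β} {s : Finset α} (h : Set.InjOn f s) {x : α} (hx : x ∈ s) :
    (s.erase x).image f = (s.image f).erase (f x) := by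
  ext y
  simp only [mem_image, mem_erase]
  constructor
  · rintro ⟨z, ⟨hzx, hz⟩, rfl⟩
    exact ⟨fun hfz => hzx (h hz hx hfz), z, hz, rfl⟩
  · rintro ⟨hy, z, hz, rfl⟩
    exact ⟨z, ⟨fun hzx => hy (hzx ▸ rfl), hz⟩, rfl⟩

theorem Finset.sort_erase {α : Type*} [LinearOrder α] (s : Finset α) (x : α) :
    (s.erase x).sort (· ≤ ·) = (s.sort (· ≤ ·)).erase x :=
  (s.erase x).sortedLT_sort.eq_of_mem_iff
    ((s.sortedLT_sort.pairwise.sublist List.erase_sublist).sortedLT)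
    fun y => by simp [(s.sort_nodup _).mem_erase_iff]

theorem Finset.nodup_map_sort {α β : Type*} [LinearOrder α] {f : α → β} {s : Finset α}
    (h : Set.InjOn f s) : ((s.sort (· ≤ ·)).map f).Nodup :=
  (s.sort_nodup _).map_on fun _ hx _ hy => h (by simpa using hx) (by simpa using hy)

theorem Finset.sort_map_perm_sort_image {α β : Type*} [LinearOrder α] [LinearOrder β]
    {f : α → β} {s : Finset α} (h : Set.InjOn f s) :
    ((s.sort (· ≤ ·)).map f).Perm ((s.image f).sort (· ≤ ·)) := by
  rw [← Multiset.coe_eq_coe, ← Multiset.map_coe, Finset.sort_eq, Finset.sort_eq,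
    Finset.image_val_of_injOn h]

def inversionCount {α : Type*} [LinearOrder α] (l : List α) : ℕ :=
  #{p : Fin l.length × Fin l.length | p.1 < p.2 ∧ l.get p.2 < l.get p.1}

theorem inversionCount_cons {α : Type*} [LinearOrder α] (x : α) (l : List α) :
    inversionCount (x :: l) = l.countP (· < x) + inversionCount l := by
  rw [inversionCount, inversionCount, ← List.card_filter_get_eq_countP]
  simp only [Finset.card_filter, Fintype.sum_prod_type]
  refine (Fin.sum_univ_succ (n := l.length) _).trans (congrArg₂ _ ?_ ?_)
  · refine (Fin.sum_univ_succ (n := l.length) _).trans ?_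
    simp
  · refine Finset.sum_congr rfl fun i _ => (Fin.sum_univ_succ (n := l.length) _).trans ?_
    simp [Fin.succ_lt_succ_iff]

theorem neg_one_pow_inversionCount_eraseIdx {α R : Type*} [LinearOrder α] [CommRing R]
    {l : List α} (hl : l.Nodup) {i : ℕ} (hi : i < l.length) :
    (-1 : R) ^ inversionCount l =
      (-1) ^ i * (-1) ^ l.countP (· < l[i]) * (-1) ^ inversionCount (l.eraseIdx i) := by
  induction l generalizing i with
  | nil => simp at hi
  | cons y l ih =>
    rw [List.nodup_cons] at hl
    cases i with
    | zero => simp [inversionCount_cons, pow_add]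
    | succ i =>
      have hi' : i < l.length := by simpa using hi
      have hxy : l[i] ≠ y := fun h => hl.1 (h ▸ List.getElem_mem hi')
      have hcount :
          l.countP (· < y) = (l.eraseIdx i).countP (· < y) + if l[i] < y then 1 else 0 := by
        rw [← (List.getElem_cons_eraseIdx_perm hi').countP_eq, List.countP_cons]
        simp
      have hsign :
          (-1 : R) ^ (if l[i] < y then 1 else 0) = -(-1) ^ (if y < l[i] then 1 else 0) := by
        rcases lt_or_gt_of_ne hxy with h | h <;> simp [h, h.not_gt]
      simp only [List.eraseIdx_cons_succ, inversionCount_cons, List.getElem_cons_succ,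
        List.countP_cons, pow_add, ih hl.2 hi', hcount, hsign, pow_succ, decide_eq_true_eq]
      ring

theorem incSign_eq_neg_one_pow_countP {m : ℕ} {s : Finset (Fin m)} {v : Fin m} (hv : v ∈ s) :
    incSign s v = (-1) ^ (s.sort (· ≤ ·)).countP (· < v) := by
  rw [incSign, (s.sortedLT_sort.pairwise).idxOf_eq_countP_lt ((s.mem_sort _).mpr hv)]

theorem incSign_mul_self {m : ℕ} (s : Finset (Fin m)) (v : Fin m) :
    incSign s v * incSign s v = 1 := by
  rw [incSign, ← pow_add, ← two_mul, pow_mul, neg_one_sq, one_pow]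

section MapSign

variable {a b : ℕ} (φ : Fin a → Fin b) {s : Finset (Fin a)}

theorem mapSign_of_injOn (h : Set.InjOn φ s) :
    mapSign φ s = (-1) ^ inversionCount ((s.sort (· ≤ ·)).map φ) := by
  rw [mapSign, if_pos (Finset.nodup_map_sort h)]
  rfl

theorem mapSign_ne_zero (h : Set.InjOn φ s) : mapSign φ s ≠ 0 := by
  rw [mapSign_of_injOn φ h]
  exact pow_ne_zero _ (by norm_num)

theorem mapSign_eq_incSign_mul (h : Set.InjOn φ s) {u : Fin a} (hu : u ∈ s) :
    mapSign φ s = incSign s u * incSign (s.image φ) (φ u) * mapSign φ (s.erase u) := by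
  set l := s.sort (· ≤ ·)
  have hi : l.idxOf u < l.length := List.idxOf_lt_length_iff.mpr ((s.mem_sort _).mpr hu)
  have hsort : (s.erase u).sort (· ≤ ·) = l.eraseIdx (l.idxOf u) := by
    rw [Finset.sort_erase, List.erase_eq_eraseIdx_of_idxOf rfl]
  have hi' : l.idxOf u < (l.map φ).length := by simpa using hi
  have hget : (l.map φ)[l.idxOf u] = φ u := by simp [List.getElem_idxOf hi]
  rw [mapSign_of_injOn φ h, mapSign_of_injOn φ (h.mono (by simp)), hsort, ← List.eraseIdx_map,
    incSign_eq_neg_one_pow_countP (Finset.mem_image_of_mem φ hu),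
    ← (Finset.sort_map_perm_sort_image h).countP_eq,
    neg_one_pow_inversionCount_eraseIdx (Finset.nodup_map_sort h) hi', hget]
  rfl

theorem incSign_mul_mapSign_erase (h : Set.InjOn φ s) {u : Fin a} (hu : u ∈ s) :
    incSign s u * mapSign φ (s.erase u) = mapSign φ s * incSign (s.image φ) (φ u) := by
  rw [mapSign_eq_incSign_mul φ h hu]
  linear_combination -(incSign s u * mapSign φ (s.erase u)) * incSign_mul_self (s.image φ) (φ u)

theorem incSign_mul_mapSign (h : Set.InjOn φ s) {u : Fin a} (hu : u ∈ s) :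
    incSign s u * mapSign φ s = mapSign φ (s.erase u) * incSign (s.image φ) (φ u) := by
  rw [mapSign_eq_incSign_mul φ h hu]
  linear_combination (incSign (s.image φ) (φ u) * mapSign φ (s.erase u)) * incSign_mul_self s u

theorem coboundary_pullback (g : Finset (Fin b) → ℝ) (h : Set.InjOn φ s) :
    coboundary (pullback φ g) s = mapSign φ s * coboundary g (s.image φ) := by
  rw [coboundary, coboundary, Finset.sum_image h, Finset.mul_sum]
  refine Finset.sum_congr rfl fun u hu => ?_
  rw [pullback, Finset.image_erase_of_injOn h hu, ← mul_assoc, incSign_mul_mapSign_erase φ h hu,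
    mul_assoc]

theorem incidence_mul_coboundary_pullback (g : Finset (Fin b) → ℝ) (h : Set.InjOn φ s)
    {u : Fin a} (hu : u ∈ s) :
    (∑ v ∈ s \ s.erase u, incSign s v) * coboundary (pullback φ g) s =
      mapSign φ (s.erase u) *
        ((∑ v ∈ s.image φ \ (s.erase u).image φ, incSign (s.image φ) v) *
          coboundary g (s.image φ)) := by
  rw [Finset.image_erase_of_injOn h hu, sdiff_erase_self hu,
    sdiff_erase_self (mem_image_of_mem φ hu), sum_singleton, sum_singleton,
    coboundary_pullback φ g h, ← mul_assoc, ← mul_assoc, incSign_mul_mapSign φ h hu]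

end MapSign

namespace IsCovering

variable {a b : ℕ} {φ : Fin a → Fin b} {K : Finset (Finset (Fin a))}
  {L : Finset (Finset (Fin b))}

theorem card_image (hcov : IsCovering φ K L) {s : Finset (Fin a)} (hs : s ∈ K) :
    (s.image φ).card = s.card :=
  ((hcov.2 _ (hcov.1 s hs)).2.1 s hs rfl).symm

theorem injOn (hcov : IsCovering φ K L) {s : Finset (Fin a)} (hs : s ∈ K) : Set.InjOn φ s :=
  Finset.card_image_iff.mp (hcov.card_image hs)

theorem image_mem_faces (hcov : IsCovering φ K L) {n : ℕ} {s : Finset (Fin a)}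
    (hs : s ∈ faces K n) : s.image φ ∈ faces L n := by
  rw [faces, mem_filter] at hs ⊢
  exact ⟨hcov.1 s hs.1, (hcov.card_image hs.1).trans hs.2⟩

theorem eq_of_image_eq (hcov : IsCovering φ K L) {s t : Finset (Fin a)} (hs : s ∈ K)
    (ht : t ∈ K) (hst : s.image φ = t.image φ) (hdisj : ¬Disjoint s t) : s = t := by
  by_contra hne
  exact hdisj ((hcov.2 _ (hcov.1 s hs)).2.2 s hs t ht rfl hst.symm hne)

theorem bijOn_image_cofaces (hcov : IsCovering φ K L) {n : ℕ} (hstrong : StrongAt φ K L n)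
    {F : Finset (Fin a)} (hF : F ∈ faces K n) :
    Set.BijOn (·.image φ) ((faces K (n + 1)).filter (F ⊆ ·) : Set (Finset (Fin a)))
      ((faces L (n + 1)).filter (F.image φ ⊆ ·) : Set (Finset (Fin b))) := by
  refine ⟨fun Fb hFb => ?_, fun Fb₁ hFb₁ Fb₂ hFb₂ himg => ?_, fun Gb hGb => ?_⟩
  · simp only [mem_coe, mem_filter] at hFb ⊢
    exact ⟨hcov.image_mem_faces hFb.1, image_subset_image hFb.2⟩
  · simp only [mem_coe, mem_filter, faces] at hFb₁ hFb₂ hF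
    have hFne : F.Nonempty := card_pos.mp (by omega)
    exact hcov.eq_of_image_eq hFb₁.1.1 hFb₂.1.1 himg
      (not_disjoint_iff_nonempty_inter.mpr (hFne.mono (subset_inter hFb₁.2 hFb₂.2)))
  · simp only [mem_coe, mem_filter] at hGb
    obtain ⟨Fb, hFb, hFFb, rfl⟩ :=
      hstrong Gb hGb.1 (F.image φ) (hcov.image_mem_faces hF) hGb.2 F hF rfl
    exact ⟨Fb, by simpa using ⟨hFb, hFFb⟩, rfl⟩

end IsCovering

theorem pullback_upLap {a b n : ℕ} {K : Finset (Finset (Fin a))} {L : Finset (Finset (Fin b))}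
    {φ : Fin a → Fin b} (hcov : IsCovering φ K L) (hstrong : StrongAt φ K L n)
    {wK : Finset (Fin a) → ℝ} {wL : Finset (Fin b) → ℝ}
    (hwK : ∀ s ∈ K, wK s ≠ 0) (hwL : ∀ s ∈ L, wL s ≠ 0)
    (hratio : ∀ Fb ∈ K, ∀ F ∈ K, F ⊆ Fb → F.card + 1 = Fb.card →
      wK Fb / wK F = wL (Fb.image φ) / wL (F.image φ))
    (g : Finset (Fin b) → ℝ) {F : Finset (Fin a)} (hF : F ∈ faces K n) :
    pullback φ (upLap L wL n g) F = upLap K wK n (pullback φ g) F := by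
  have hFK : F ∈ K := (mem_filter.mp hF).1
  rw [pullback, upLap, upLap, if_neg (hwL _ (hcov.1 F hFK)), if_neg (hwK F hFK), mul_sum, mul_sum,
    mul_sum]
  have hbij := hcov.bijOn_image_cofaces hstrong hF
  refine (sum_nbij (·.image φ) (fun _ h => hbij.mapsTo h) hbij.injOn hbij.surjOn
    fun Fb hFb => ?_).symm
  obtain ⟨⟨hFbK, hFbcard⟩, hFFb⟩ : (Fb ∈ K ∧ Fb.card = n + 2) ∧ F ⊆ Fb := by
    simpa [faces] using hFb
  have hcard : F.card + 1 = Fb.card := by rw [(mem_filter.mp hF).2, hFbcard]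
  obtain ⟨u, hu, rfl⟩ := (covBy_iff_card_sdiff_eq_one.mpr
    ⟨hFFb, by rw [card_sdiff_of_subset hFFb]; omega⟩).exists_finset_erase
  calc (wK (Fb.erase u))⁻¹ * (wK Fb * (∑ v ∈ Fb \ Fb.erase u, incSign Fb v) *
        coboundary (pullback φ g) Fb)
      = wK Fb / wK (Fb.erase u) *
          ((∑ v ∈ Fb \ Fb.erase u, incSign Fb v) * coboundary (pullback φ g) Fb) := by ring
    _ = _ := by
      rw [hratio Fb hFbK _ hFK hFFb hcard,
        incidence_mul_coboundary_pullback φ g (hcov.injOn hFbK) hu]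
      ring

theorem pullback_ne_zero {a b : ℕ} {K : Finset (Finset (Fin a))} {L : Finset (Finset (Fin b))}
    {φ : Fin a → Fin b} (hcov : IsCovering φ K L) {g : Finset (Fin b) → ℝ} (hg : g ≠ 0)
    (hsupp : ∀ G ∉ L, g G = 0) : pullback φ g ≠ 0 := by
  obtain ⟨G, hG⟩ := Function.ne_iff.mp hg
  have hGL : G ∈ L := by_contra fun h => hG (hsupp G h)
  obtain ⟨F, hFK, rfl⟩ := (hcov.2 G hGL).1
  exact Function.ne_iff.mpr ⟨F, mul_ne_zero (mapSign_ne_zero φ (hcov.injOn hFK)) hG⟩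

theorem stmt_16_general {a b n : ℕ} (K : Finset (Finset (Fin a))) (L : Finset (Finset (Fin b)))
    (φ : Fin a → Fin b) (hcov : IsCovering φ K L)
    (hstrong : ∀ d : ℕ, StrongAt φ K L d)
    (wK : Finset (Fin a) → ℝ) (wL : Finset (Fin b) → ℝ)
    (hposK : ∀ s ∈ K, 0 < wK s) (hposL : ∀ s ∈ L, 0 < wL s)
    (hratio : ∀ Fb ∈ K, ∀ F ∈ K, F ⊆ Fb → F.card + 1 = Fb.card →
        wK Fb / wK F = wL (Fb.image φ) / wL (F.image φ)) :
    (∀ g : Finset (Fin b) → ℝ, ∀ F ∈ faces K n,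
        pullback φ (fun G => upLap L wL n g G) F = upLap K wK n (pullback φ g) F) ∧
    (∀ μ : ℝ, ∀ g : Finset (Fin b) → ℝ, g ≠ 0 →
        (∀ G, G ∉ faces L n → g G = 0) →
        (∀ G ∈ faces L n, upLap L wL n g G = μ * g G) →
        pullback φ g ≠ 0 ∧
          ∀ F ∈ faces K n, upLap K wK n (pullback φ g) F = μ * pullback φ g F) := by
  have hcomm : ∀ g : Finset (Fin b) → ℝ, ∀ F ∈ faces K n,
      pullback φ (upLap L wL n g) F = upLap K wK n (pullback φ g) F := fun g _ hF =>
    pullback_upLap hcov (hstrong n) (fun s hs => (hposK s hs).ne') (fun s hs => (hposL s hs).ne')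
      hratio g hF
  refine ⟨hcomm, fun μ g hg hsupp heig => ⟨?_, fun F hF => ?_⟩⟩
  · exact pullback_ne_zero hcov hg fun G hG => hsupp G fun h => hG (mem_filter.mp h).1
  · rw [← hcomm g F hF, pullback, pullback, heig _ (hcov.image_mem_faces hF)]
    ring

/-- **Theorem 3.11.** Let `φ : K → L` be a strong covering with weights satisfying
`w_K(F̄)/w_K(F) = w_L(φ(F̄))/w_L(φ(F))` whenever `F` is a facet of `F̄`. Then
`φ ∘ L^{up}_n(L) = L^{up}_n(K) ∘ φ` on cochains; consequently every eigenvalue of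
`L^{up}_n(L,w_L)` is an eigenvalue of `L^{up}_n(K,w_K)`, with eigenvectors given by
`φ`-pullbacks (which are nonzero for nonzero eigenfunctions). -/
theorem stmt_16 {a b n : ℕ} (K : Finset (Finset (Fin a))) (L : Finset (Finset (Fin b)))
    (hK : IsComplex K) (hL : IsComplex L)
    (φ : Fin a → Fin b) (hcov : IsCovering φ K L)
    (hstrong : ∀ d : ℕ, StrongAt φ K L d)
    (wK : Finset (Fin a) → ℝ) (wL : Finset (Fin b) → ℝ)
    (hposK : ∀ s ∈ K, 0 < wK s) (hposL : ∀ s ∈ L, 0 < wL s)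
    (hratio : ∀ Fb ∈ K, ∀ F ∈ K, F ⊆ Fb → F.card + 1 = Fb.card →
        wK Fb / wK F = wL (Fb.image φ) / wL (F.image φ)) :
    (∀ g : Finset (Fin b) → ℝ, ∀ F ∈ faces K n,
        pullback φ (fun G => upLap L wL n g G) F = upLap K wK n (pullback φ g) F) ∧
    (∀ μ : ℝ, ∀ g : Finset (Fin b) → ℝ, g ≠ 0 →
        (∀ G, G ∉ faces L n → g G = 0) →
        (∀ G ∈ faces L n, upLap L wL n g G = μ * g G) →
        pullback φ g ≠ 0 ∧
          ∀ F ∈ faces K n, upLap K wK n (pullback φ g) F = μ * pullback φ g F) :=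
  stmt_16_general K L φ hcov hstrong wK wL hposK hposL hratio
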